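/- For a ∈ ℂ with Im a < 1/2 and Re s > 0, the function v_+(s) := (1/Γ(ia/2 + 1/4)) e^{is/4} ∫₀^∞ e^{-ps} p^{ia/2 - 3/4}(1 + 2ip)^{-ia/2 - 3/4} dp satisfies v'' + (1/(2s)) v' + (1/16 - a/(4s)) v = 0, hence E_+(a,x) := v_+(x²) solves u'' + (x²/4 - a)u = 0. -/

import Mathlib

/-!
Write `v₊ = Γ⁻¹ e^{is/4} W₀`, where `W_n(s) = ∫₀^∞ pⁿ e^{-ps} f(p) dp` and
`f(p) = p^{ia/2 - 3/4} (1 + 2ip)^{-ia/2 - 3/4}`. Since `Re(-ia/2 - 3/4) ≤ 0` we have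
`|f(p)| ≤ C p^{-Im a/2 - 3/4}` with exponent `> -1`, so the moments converge for `Re s > 0` and
differentiation under the integral sign gives `W_n' = -W_{n+1}`.

The kernel satisfies `d/dp [(p - i/2) p f(p)] = (p/2 + a/4 - i/8) f(p)`. Integrating
`d/dp [e^{-ps} p (p - i/2) f(p)]` over `(0, ∞)`, where the boundary terms vanish, gives
`(a/4 - i/8) W₀ + (1/2 + is/2) W₁ - s W₂ = 0`, which is the differential equation for `v₊` once
`v₊'` and `v₊''` are expressed through `W₀, W₁, W₂`. The equation for `v₊(x²)` then follows from
the chain rule.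
-/

open Complex MeasureTheory

/-- The Laplace-integral solution `v₊(a,s)`. -/
noncomputable def vplus (a s : ℂ) : ℂ :=
  (Complex.Gamma (Complex.I * a / 2 + 1 / 4))⁻¹ * Complex.exp (Complex.I * s / 4) *
    ∫ p in Set.Ioi (0 : ℝ),
      Complex.exp (-(p : ℂ) * s) * (p : ℂ) ^ (Complex.I * a / 2 - 3 / 4) *
        (1 + 2 * Complex.I * (p : ℂ)) ^ (-Complex.I * a / 2 - 3 / 4)

open Set Filter Topology

section SecondDerivative

variable {𝕜 F : Type*} [NontriviallyNormedField 𝕜] [NormedAddCommGroup F] [NormedSpace 𝕜 F]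
  {U : Set 𝕜} {v v₁ v₂ : 𝕜 → F}

theorem deriv_deriv_eq_of_hasDerivAt (hU : IsOpen U) (h₀ : ∀ t ∈ U, HasDerivAt v (v₁ t) t)
    (h₁ : ∀ t ∈ U, HasDerivAt v₁ (v₂ t) t) {s : 𝕜} (hs : s ∈ U) :
    deriv (deriv v) s = v₂ s := by
  have : deriv v =ᶠ[𝓝 s] v₁ := eventually_of_mem (hU.mem_nhds hs) fun t ht => (h₀ t ht).deriv
  rw [this.deriv_eq, (h₁ s hs).deriv]

theorem deriv_deriv_comp_sq (hU : IsOpen U) (h₀ : ∀ t ∈ U, HasDerivAt v (v₁ t) t)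
    (h₁ : ∀ t ∈ U, HasDerivAt v₁ (v₂ t) t) {x : 𝕜} (hx : x ^ 2 ∈ U) :
    deriv (deriv fun t => v (t ^ 2)) x = (4 * x ^ 2) • v₂ (x ^ 2) + (2 : 𝕜) • v₁ (x ^ 2) := by
  have hsq (t : 𝕜) : HasDerivAt (fun t => t ^ 2) (2 * t) t :=
    (hasDerivAt_pow 2 t).congr_deriv (by ring)
  have hU' : IsOpen ((fun t : 𝕜 => t ^ 2) ⁻¹' U) := hU.preimage (continuous_pow 2)
  refine deriv_deriv_eq_of_hasDerivAt hU' (v := fun t => v (t ^ 2))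
    (v₁ := fun t => (2 * t) • v₁ (t ^ 2))
    (v₂ := fun t => (4 * t ^ 2) • v₂ (t ^ 2) + (2 : 𝕜) • v₁ (t ^ 2))
    (fun t ht => ?_) (fun t ht => ?_) hx
  · exact (h₀ _ ht).scomp t (hsq t)
  · have h₁' : HasDerivAt (fun t => v₁ (t ^ 2)) ((2 * t) • v₂ (t ^ 2)) t :=
      (h₁ _ ht).scomp t (hsq t)
    refine (((hasDerivAt_id t).const_mul 2).smul h₁').congr_deriv ?_
    simp only [id, mul_one, smul_smul]
    ring_nf

end SecondDerivative

section LaplaceMoment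

noncomputable def laplaceMoment (f : ℝ → ℂ) (n : ℕ) (s : ℂ) : ℂ :=
  ∫ p in Ioi (0 : ℝ), (p : ℂ) ^ n * cexp (-p * s) * f p

variable {f : ℝ → ℂ} {C σ : ℝ}

theorem norm_laplaceMoment_integrand_le (hf : ∀ p > 0, ‖f p‖ ≤ C * p ^ σ) (n : ℕ) {δ : ℝ} {s : ℂ}
    (hδ : δ ≤ s.re) {p : ℝ} (hp : 0 < p) :
    ‖(p : ℂ) ^ n * cexp (-p * s) * f p‖ ≤ C * (p ^ (σ + n) * Real.exp (-δ * p)) := by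
  have hexp : ‖cexp (-p * s)‖ ≤ Real.exp (-δ * p) := by
    rw [norm_exp, Real.exp_le_exp]
    have : (-(p : ℂ) * s).re = -(p * s.re) := by simp
    rw [this]
    nlinarith
  rw [norm_mul, norm_mul, norm_pow, norm_real, Real.norm_of_nonneg hp.le,
    Real.rpow_add hp, Real.rpow_natCast]
  calc p ^ n * ‖cexp (-p * s)‖ * ‖f p‖ ≤ p ^ n * Real.exp (-δ * p) * (C * p ^ σ) := by
        gcongr
        exact hf p hp
    _ = _ := by ring

theorem integrableOn_laplaceMoment_integrand
    (hfm : AEStronglyMeasurable f (volume.restrict (Ioi 0))) (hσ : -1 < σ)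
    (hf : ∀ p > 0, ‖f p‖ ≤ C * p ^ σ) (n : ℕ) {s : ℂ} (hs : 0 < s.re) :
    IntegrableOn (fun p : ℝ => (p : ℂ) ^ n * cexp (-p * s) * f p) (Ioi 0) := by
  have hdom : IntegrableOn (fun p : ℝ => C * (p ^ (σ + n) * Real.exp (-s.re * p))) (Ioi 0) := by
    have := integrableOn_rpow_mul_exp_neg_mul_rpow
      (by linarith [n.cast_nonneg (α := ℝ)] : -1 < σ + n) one_pos hs
    simp only [Real.rpow_one] at this
    exact this.const_mul C
  refine hdom.mono' (((by fun_prop : Continuous fun p : ℝ => (p : ℂ) ^ n * cexp (-p * s)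
    ).aestronglyMeasurable).mul hfm) ?_
  filter_upwards [ae_restrict_mem measurableSet_Ioi] with p hp
  exact norm_laplaceMoment_integrand_le hf n le_rfl hp

theorem hasDerivAt_laplaceMoment (hfm : AEStronglyMeasurable f (volume.restrict (Ioi 0)))
    (hσ : -1 < σ) (hf : ∀ p > 0, ‖f p‖ ≤ C * p ^ σ) (n : ℕ) {s : ℂ} (hs : 0 < s.re) :
    HasDerivAt (laplaceMoment f n) (-laplaceMoment f (n + 1) s) s := by
  have hδ : 0 < s.re / 2 := by positivity
  have hmeas (k : ℕ) (t : ℂ) : AEStronglyMeasurable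
      (fun p : ℝ => (p : ℂ) ^ k * cexp (-p * t) * f p) (volume.restrict (Ioi 0)) :=
    ((by fun_prop : Continuous fun p : ℝ => (p : ℂ) ^ k * cexp (-p * t)
      ).aestronglyMeasurable).mul hfm
  have hball {t : ℂ} (ht : t ∈ Metric.ball s (s.re / 2)) : s.re / 2 ≤ t.re := by
    have := (abs_re_le_norm (t - s)).trans (mem_ball_iff_norm.mp ht).le
    rw [sub_re] at this
    linarith [abs_le.mp this]
  have key := hasDerivAt_integral_of_dominated_loc_of_deriv_le
    (F' := fun t p => -((p : ℂ) ^ (n + 1) * cexp (-p * t) * f p))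
    (bound := fun p => C * (p ^ (σ + (n + 1 : ℕ)) * Real.exp (-(s.re / 2) * p)))
    (Metric.ball_mem_nhds s hδ) (Eventually.of_forall (hmeas n))
    (integrableOn_laplaceMoment_integrand hfm hσ hf n hs) (hmeas (n + 1) s).neg ?_ ?_ ?_
  · rw [laplaceMoment, ← integral_neg]
    exact key.2
  · filter_upwards [ae_restrict_mem measurableSet_Ioi] with p hp t ht
    rw [norm_neg]
    exact norm_laplaceMoment_integrand_le hf (n + 1) (hball ht) hp
  · have := integrableOn_rpow_mul_exp_neg_mul_rpow
      (by push_cast; linarith [n.cast_nonneg (α := ℝ)] : -1 < σ + (n + 1 : ℕ)) one_pos hδ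
    simp only [Real.rpow_one] at this
    exact this.const_mul C
  · filter_upwards with p t _
    have hexp : HasDerivAt (fun t : ℂ => cexp (-p * t)) (cexp (-p * t) * -p) t :=
      ((hasDerivAt_id t).const_mul _).cexp.congr_deriv (by simp)
    refine ((hexp.const_mul ((p : ℂ) ^ n)).mul_const (f p)).congr_deriv ?_
    ring

end LaplaceMoment

section Kernel

theorem cpow_add_one_eq_mul {z : ℂ} (hz : z ≠ 0) (c : ℂ) : z ^ (c + 1) = z ^ c * z := by
  rw [cpow_add _ _ hz, cpow_one]

noncomputable def vplusKernel (a : ℂ) (p : ℝ) : ℂ :=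
  (p : ℂ) ^ (I * a / 2 - 3 / 4) * (1 + 2 * I * p) ^ (-I * a / 2 - 3 / 4)

variable {a : ℂ}

theorem one_add_two_I_mul_ofReal_mem_slitPlane (p : ℝ) : 1 + 2 * I * p ∈ slitPlane := by
  rw [mem_slitPlane_iff]
  left
  simp

theorem continuousOn_vplusKernel : ContinuousOn (vplusKernel a) (Ioi 0) := by
  intro p hp
  have h₁ : ContinuousAt (fun z : ℂ => z ^ (I * a / 2 - 3 / 4)) p :=
    continuousAt_cpow_const (ofReal_mem_slitPlane.mpr hp)
  have h₂ : ContinuousAt (fun z : ℂ => z ^ (-I * a / 2 - 3 / 4)) (1 + 2 * I * p) :=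
    continuousAt_cpow_const (one_add_two_I_mul_ofReal_mem_slitPlane p)
  exact ((h₁.comp continuous_ofReal.continuousAt).mul
    (h₂.comp (f := fun q : ℝ => 1 + 2 * I * (q : ℂ)) (by fun_prop))).continuousWithinAt

theorem norm_vplusKernel_le (ha : a.im ≤ 3 / 2) {p : ℝ} (hp : 0 < p) :
    ‖vplusKernel a p‖ ≤ Real.exp (Real.pi * |a.re| / 2) * p ^ (-a.im / 2 - 3 / 4) := by
  set z : ℂ := 1 + 2 * I * p
  have h₁ : ‖(p : ℂ) ^ (I * a / 2 - 3 / 4)‖ = p ^ (-a.im / 2 - 3 / 4) := by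
    rw [norm_cpow_eq_rpow_re_of_pos hp]
    congr 1
    simp
  have hre : ‖z‖ ^ (-I * a / 2 - 3 / 4).re ≤ 1 :=
    Real.rpow_le_one_of_one_le_of_nonpos (by simpa [z] using abs_re_le_norm z)
      (by simp; linarith)
  have him : -(arg z * (-I * a / 2 - 3 / 4).im) ≤ Real.pi * |a.re| / 2 := by
    have : (-I * a / 2 - 3 / 4).im = -a.re / 2 := by simp
    rw [this]
    nlinarith [le_abs_self (arg z * a.re), abs_mul (arg z) a.re, abs_arg_le_pi z,
      abs_nonneg a.re]
  have h₂ : ‖z ^ (-I * a / 2 - 3 / 4)‖ ≤ Real.exp (Real.pi * |a.re| / 2) := by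
    refine (norm_cpow_le _ _).trans ?_
    rw [div_eq_mul_inv, ← Real.exp_neg]
    calc _ ≤ 1 * Real.exp (Real.pi * |a.re| / 2) := by gcongr
      _ = _ := one_mul _
  rw [vplusKernel, norm_mul, h₁, mul_comm]
  gcongr

/-- For `p > 0` this is `p (p - i/2) e^{-ps} vplusKernel a p`; the power `p ^ (i a / 2 + 1 / 4)`
makes it continuous at `p = 0`. -/
noncomputable def vplusBoundary (a s : ℂ) (p : ℝ) : ℂ :=
  cexp (-p * s) * ((p : ℂ) - I / 2) * (p : ℂ) ^ (I * a / 2 + 1 / 4) *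
    (1 + 2 * I * p) ^ (-I * a / 2 - 3 / 4)

theorem vplusBoundary_eq_of_pos {s : ℂ} {p : ℝ} (hp : 0 < p) :
    vplusBoundary a s p = (p : ℂ) ^ 2 * cexp (-p * s) * vplusKernel a p
      - I / 2 * ((p : ℂ) ^ 1 * cexp (-p * s) * vplusKernel a p) := by
  rw [vplusBoundary, vplusKernel, show I * a / 2 + 1 / 4 = I * a / 2 - 3 / 4 + 1 by ring,
    cpow_add_one_eq_mul (ofReal_ne_zero.mpr hp.ne')]
  ring

theorem vplusBoundary_zero (ha : a.im < 1 / 2) (s : ℂ) : vplusBoundary a s 0 = 0 := by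
  have : I * a / 2 + 1 / 4 ≠ 0 := fun h => by
    have := congrArg re h
    simp at this
    linarith
  simp only [vplusBoundary, ofReal_zero, zero_cpow this, mul_zero, zero_mul]

theorem continuousAt_vplusBoundary_zero (ha : a.im < 1 / 2) (s : ℂ) :
    ContinuousAt (vplusBoundary a s) 0 := by
  have hpow : ContinuousAt (fun z : ℂ => z ^ (I * a / 2 + 1 / 4)) ((0 : ℝ) : ℂ) :=
    continuousAt_cpow_const_of_re_pos (by simp) (by simp; linarith)
  have hQ : ContinuousAt (fun z : ℂ => z ^ (-I * a / 2 - 3 / 4)) (1 + 2 * I * (0 : ℝ)) :=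
    continuousAt_cpow_const (one_add_two_I_mul_ofReal_mem_slitPlane 0)
  exact ((by fun_prop : Continuous fun p : ℝ => cexp (-p * s) * ((p : ℂ) - I / 2)).continuousAt.mul
    (hpow.comp continuous_ofReal.continuousAt)).mul
    (hQ.comp (f := fun q : ℝ => 1 + 2 * I * (q : ℂ)) (by fun_prop))

theorem hasDerivAt_vplusBoundary (s : ℂ) {p : ℝ} (hp : 0 < p) :
    HasDerivAt (vplusBoundary a s)
      ((a / 4 - I / 8) * ((p : ℂ) ^ 0 * cexp (-p * s) * vplusKernel a p)
        + (1 / 2 + I * s / 2) * ((p : ℂ) ^ 1 * cexp (-p * s) * vplusKernel a p)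
        - s * ((p : ℂ) ^ 2 * cexp (-p * s) * vplusKernel a p)) p := by
  have hz : (p : ℂ) ∈ slitPlane := ofReal_mem_slitPlane.mpr hp
  have hz0 : (p : ℂ) ≠ 0 := slitPlane_ne_zero hz
  have hq0 : 1 + 2 * I * (p : ℂ) ≠ 0 := slitPlane_ne_zero (one_add_two_I_mul_ofReal_mem_slitPlane p)
  have hE : HasDerivAt (fun z : ℂ => cexp (-z * s)) (cexp (-p * s) * (-1 * s)) p :=
    ((hasDerivAt_id (p : ℂ)).neg.mul_const s).cexp
  have hP : HasDerivAt (fun z : ℂ => z ^ (I * a / 2 + 1 / 4))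
      ((I * a / 2 + 1 / 4) * (p : ℂ) ^ (I * a / 2 + 1 / 4 - 1) * 1) p :=
    (hasDerivAt_id (p : ℂ)).cpow_const hz
  have hQ : HasDerivAt (fun z : ℂ => (1 + 2 * I * z) ^ (-I * a / 2 - 3 / 4))
      ((-I * a / 2 - 3 / 4) * (1 + 2 * I * p) ^ (-I * a / 2 - 3 / 4 - 1) * (2 * I)) p :=
    (((hasDerivAt_id (p : ℂ)).const_mul (2 * I)).const_add 1).cpow_const
      (one_add_two_I_mul_ofReal_mem_slitPlane p) |>.congr_deriv (by simp)
  refine (((hE.mul ((hasDerivAt_id (p : ℂ)).sub_const (I / 2))).mul hP).mul hQ).comp_ofReal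
    |>.congr_deriv ?_
  have hP' : (p : ℂ) ^ (I * a / 2 + 1 / 4 - 1) = (p : ℂ) ^ (I * a / 2 - 3 / 4) := by ring_nf
  have hPz : (p : ℂ) ^ (I * a / 2 + 1 / 4) = (p : ℂ) ^ (I * a / 2 - 3 / 4) * p := by
    rw [show I * a / 2 + 1 / 4 = I * a / 2 - 3 / 4 + 1 by ring, cpow_add_one_eq_mul hz0]
  have hQ' : (1 + 2 * I * (p : ℂ)) ^ (-I * a / 2 - 3 / 4)
      = (1 + 2 * I * (p : ℂ)) ^ (-I * a / 2 - 3 / 4 - 1) * (1 + 2 * I * p) := by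
    conv_lhs => rw [← sub_add_cancel (-I * a / 2 - 3 / 4) 1]
    exact cpow_add_one_eq_mul hq0 _
  simp only [Pi.mul_apply, vplusKernel, id, hP', hPz, hQ']
  linear_combination -(cexp (-p * s) * (p : ℂ) ^ (I * a / 2 - 3 / 4) *
    (1 + 2 * I * (p : ℂ)) ^ (-I * a / 2 - 3 / 4 - 1) *
    ((1 + 2 * I * p) * a / 4 + (-I * a / 2 - 3 / 4) * p)) * I_sq

theorem integrableOn_vplusKernel_moment (ha : a.im < 1 / 2) (n : ℕ) {s : ℂ} (hs : 0 < s.re) :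
    IntegrableOn (fun p : ℝ => (p : ℂ) ^ n * cexp (-p * s) * vplusKernel a p) (Ioi 0) :=
  integrableOn_laplaceMoment_integrand
    (continuousOn_vplusKernel.aestronglyMeasurable measurableSet_Ioi) (by linarith)
    (fun _ hp => norm_vplusKernel_le (by linarith) hp) n hs

theorem hasDerivAt_vplusKernel_moment (ha : a.im < 1 / 2) (n : ℕ) {s : ℂ} (hs : 0 < s.re) :
    HasDerivAt (laplaceMoment (vplusKernel a) n) (-laplaceMoment (vplusKernel a) (n + 1) s) s :=
  hasDerivAt_laplaceMoment (continuousOn_vplusKernel.aestronglyMeasurable measurableSet_Ioi)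
    (by linarith) (fun _ hp => norm_vplusKernel_le (by linarith) hp) n hs

theorem vplusKernel_moment_relation (ha : a.im < 1 / 2) {s : ℂ} (hs : 0 < s.re) :
    (a / 4 - I / 8) * laplaceMoment (vplusKernel a) 0 s
      + (1 / 2 + I * s / 2) * laplaceMoment (vplusKernel a) 1 s
      - s * laplaceMoment (vplusKernel a) 2 s = 0 := by
  have hM (n : ℕ) := integrableOn_vplusKernel_moment ha n hs
  have hderiv (p : ℝ) (hp : p ∈ Ioi 0) := hasDerivAt_vplusBoundary (a := a) s hp
  have h₀ := (hM 0).const_mul (a / 4 - I / 8)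
  have h₁ := (hM 1).const_mul (1 / 2 + I * s / 2)
  have h₂ := (hM 2).const_mul s
  have hint := Integrable.sub' (h₀.fun_add h₁) h₂
  have hG : IntegrableOn (vplusBoundary a s) (Ioi 0) :=
    ((hM 2).sub ((hM 1).const_mul (I / 2))).congr_fun
      (fun _ hp => (vplusBoundary_eq_of_pos hp).symm) measurableSet_Ioi
  have := integral_Ioi_of_hasDerivAt_of_tendsto
    (continuousAt_vplusBoundary_zero ha s).continuousWithinAt hderiv hint
    (tendsto_zero_of_hasDerivAt_of_integrableOn_Ioi hderiv hint hG)
  rw [vplusBoundary_zero ha, sub_zero, integral_sub (h₀.fun_add h₁) h₂, integral_add h₀ h₁,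
    integral_const_mul, integral_const_mul, integral_const_mul] at this
  exact this

end Kernel

section Vplus
variable {a : ℂ}

theorem vplus_eq_laplaceMoment (s : ℂ) :
    vplus a s = (Gamma (I * a / 2 + 1 / 4))⁻¹ * cexp (I * s / 4)
      * laplaceMoment (vplusKernel a) 0 s := by
  simp only [vplus, laplaceMoment, vplusKernel, pow_zero, one_mul, mul_assoc]

noncomputable def vplusDeriv (a s : ℂ) : ℂ :=
  (Gamma (I * a / 2 + 1 / 4))⁻¹ * cexp (I * s / 4) *
    (I / 4 * laplaceMoment (vplusKernel a) 0 s - laplaceMoment (vplusKernel a) 1 s)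

noncomputable def vplusDeriv2 (a s : ℂ) : ℂ :=
  (Gamma (I * a / 2 + 1 / 4))⁻¹ * cexp (I * s / 4) *
    (laplaceMoment (vplusKernel a) 2 s - I / 2 * laplaceMoment (vplusKernel a) 1 s
      - laplaceMoment (vplusKernel a) 0 s / 16)

theorem hasDerivAt_const_mul_cexp_I_mul_div_four_mul {K W' s : ℂ} {W : ℂ → ℂ}
    (hW : HasDerivAt W W' s) :
    HasDerivAt (fun s => K * cexp (I * s / 4) * W s)
      (K * cexp (I * s / 4) * (I / 4 * W s + W')) s := by
  have hE : HasDerivAt (fun s => cexp (I * s / 4)) (cexp (I * s / 4) * (I / 4)) s :=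
    (((hasDerivAt_id s).const_mul I).div_const 4).cexp.congr_deriv (by simp)
  exact ((hE.const_mul K).mul hW).congr_deriv (by ring)

theorem hasDerivAt_vplus (ha : a.im < 1 / 2) {s : ℂ} (hs : 0 < s.re) :
    HasDerivAt (vplus a) (vplusDeriv a s) s := by
  rw [show vplus a = _ from funext vplus_eq_laplaceMoment]
  exact (hasDerivAt_const_mul_cexp_I_mul_div_four_mul
    (hasDerivAt_vplusKernel_moment ha 0 hs)).congr_deriv (by rw [vplusDeriv]; ring)

theorem hasDerivAt_vplusDeriv (ha : a.im < 1 / 2) {s : ℂ} (hs : 0 < s.re) :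
    HasDerivAt (vplusDeriv a) (vplusDeriv2 a s) s := by
  refine (hasDerivAt_const_mul_cexp_I_mul_div_four_mul
    (((hasDerivAt_vplusKernel_moment ha 0 hs).const_mul (I / 4)).sub
      (hasDerivAt_vplusKernel_moment ha 1 hs))).congr_deriv ?_
  simp only [vplusDeriv2, Pi.sub_apply, zero_add]
  linear_combination (Gamma (I * a / 2 + 1 / 4))⁻¹ * cexp (I * s / 4) *
    laplaceMoment (vplusKernel a) 0 s / 16 * I_sq

theorem vplus_ode (ha : a.im < 1 / 2) {s : ℂ} (hs : 0 < s.re) :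
    vplusDeriv2 a s + 1 / (2 * s) * vplusDeriv a s + (1 / 16 - a / (4 * s)) * vplus a s = 0 := by
  have hs0 : s ≠ 0 := fun h => by simp [h] at hs
  rw [vplusDeriv2, vplusDeriv, vplus_eq_laplaceMoment]
  generalize (Gamma (I * a / 2 + 1 / 4))⁻¹ = K
  field_simp
  linear_combination -128 * cexp (I * s / 4) * K * vplusKernel_moment_relation ha hs

end Vplus

/-- For `Im a < 1/2` and `Re s > 0`, the function `v₊(a,s)` satisfies
`v'' + (1/(2s)) v' + (1/16 - a/(4s)) v = 0`; hence `E₊(a,x) := v₊(a,x²)` solves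
`u'' + (x²/4 - a) u = 0`. -/
theorem vplus_solves (a : ℂ) (ha : a.im < 1 / 2) :
    (∀ s : ℂ, 0 < s.re →
        deriv (deriv (vplus a)) s + (1 / (2 * s)) * deriv (vplus a) s
          + (1 / 16 - a / (4 * s)) * vplus a s = 0) ∧
      (∀ x : ℂ, 0 < (x ^ 2).re →
        deriv (deriv (fun t : ℂ => vplus a (t ^ 2))) x
          + (x ^ 2 / 4 - a) * vplus a (x ^ 2) = 0) := by
  have hU : IsOpen {s : ℂ | 0 < s.re} := isOpen_lt continuous_const continuous_re
  have h₀ (s : ℂ) (hs : s ∈ {s : ℂ | 0 < s.re}) := hasDerivAt_vplus ha hs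
  have h₁ (s : ℂ) (hs : s ∈ {s : ℂ | 0 < s.re}) := hasDerivAt_vplusDeriv ha hs
  refine ⟨fun s hs => ?_, fun x hx => ?_⟩
  · rw [deriv_deriv_eq_of_hasDerivAt hU h₀ h₁ hs, (h₀ s hs).deriv]
    exact vplus_ode ha hs
  · have hx0 : x ≠ 0 := by rintro rfl; simp at hx
    have hode := vplus_ode ha hx
    rw [deriv_deriv_comp_sq hU h₀ h₁ hx, smul_eq_mul, smul_eq_mul]
    field_simp at hode
    linear_combination hode / 32
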